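/- Let H be an N×N Hermitian matrix and R(z) = (H − zI)^{−1}. Then for every u ∈ ℝ, v > 0, s ≥ 1 and all indices j, k: |R_{jj}(u+iv)| ≤ s |R_{jj}(u+isv)|, and |R_{jk}(u+iv)| ≤ |R_{jk}(u+isv)| + (s−1) v |[R(u+iv) R(u+isv)]_{jk}| ≤ |R_{jk}(u+isv)| + (s−1) √( Im R_{jj}(u+isv) · Im R_{kk}(u+isv) ). -/

import Mathlib

/-! The resolvent identity `R(z) - R(w) = (z - w) R(z) R(w)` gives the middle inequality.
Cauchy–Schwarz bounds `[R(z) R(w)]ⱼₖ` by a row norm of `R(z)` and a column norm of `R(w)`, which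
the Ward identity `∑ₐ |R(z)ⱼₐ|² = Im R(z)ⱼⱼ / Im z` turns into imaginary parts. By the spectral
theorem, `η ↦ η Im R(u + iη)ⱼⱼ` is nondecreasing, so `Im R(u + iv)ⱼⱼ ≤ s Im R(u + isv)ⱼⱼ`, which
gives the last inequality. The first one is the case `j = k` of the other two, since
`Im Rⱼⱼ ≤ |Rⱼⱼ|`. -/

open Complex Matrix

theorem Complex.normSq_ofReal_sub_add_mul_I (x u η : ℝ) :
    normSq (x - (u + η * I)) = (x - u) ^ 2 + η ^ 2 := by
  simp [normSq_apply, sq]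

namespace Matrix

variable {n : Type*} [Fintype n]

theorem norm_mul_apply_le_sqrt_mul_sqrt {α : Type*} [SeminormedRing α] {m p : Type*}
    (A : Matrix m n α) (B : Matrix n p α) (j : m) (k : p) :
    ‖(A * B) j k‖ ≤ √(∑ a, ‖A j a‖ ^ 2) * √(∑ a, ‖B a k‖ ^ 2) :=
  calc ‖(A * B) j k‖ ≤ ∑ a, ‖A j a‖ * ‖B a k‖ :=
        (norm_sum_le _ _).trans (Finset.sum_le_sum fun _ _ => norm_mul_le _ _)
    _ ≤ _ := Real.sum_mul_le_sqrt_mul_sqrt _ _ _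

variable [DecidableEq n]

theorem resolvent_sub_resolvent {R : Type*} [CommRing R] {H : Matrix n n R} {z w : R}
    (hz : IsUnit (H - z • 1)) (hw : IsUnit (H - w • 1)) :
    (H - z • 1)⁻¹ - (H - w • 1)⁻¹ = (z - w) • ((H - z • 1)⁻¹ * (H - w • 1)⁻¹) := by
  rw [inv_sub_inv (iff_of_true hz hw), sub_sub_sub_cancel_left, ← sub_smul, Matrix.mul_smul,
    Matrix.mul_one, Matrix.smul_mul]

namespace IsHermitian

variable {H : Matrix n n ℂ}

theorem isUnit_sub_smul_one (hH : H.IsHermitian) {z : ℂ} (hz : z.im ≠ 0) :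
    IsUnit (H - z • 1) := by
  have hzσ : z ∉ spectrum ℂ H := by
    rw [hH.spectrum_eq_image_range]
    rintro ⟨x, -, rfl⟩
    exact hz (Complex.ofReal_im x)
  rw [spectrum.mem_iff, not_not, Algebra.algebraMap_eq_smul_one] at hzσ
  simpa using hzσ.neg

theorem conjTranspose_resolvent (hH : H.IsHermitian) (z : ℂ) :
    ((H - z • 1)⁻¹)ᴴ = (H - star z • 1)⁻¹ := by
  rw [conjTranspose_nonsing_inv, conjTranspose_sub, hH.eq, conjTranspose_smul, conjTranspose_one]

theorem resolvent_eq_conjStarAlgAut (hH : H.IsHermitian) {z : ℂ} (hz : z.im ≠ 0) :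
    (H - z • 1)⁻¹ = Unitary.conjStarAlgAut ℂ _ hH.eigenvectorUnitary
      (diagonal fun a => ((hH.eigenvalues a : ℂ) - z)⁻¹) := by
  have hne : ∀ a, (hH.eigenvalues a : ℂ) - z ≠ 0 := fun a h => hz (by
    simpa using congrArg Complex.im h)
  apply inv_eq_right_inv
  nth_rw 1 [hH.spectral_theorem]
  rw [← map_one (Unitary.conjStarAlgAut ℂ _ hH.eigenvectorUnitary), ← map_smul, ← map_sub,
    ← map_mul, smul_one_eq_diagonal, diagonal_sub, diagonal_mul_diagonal]
  simp [mul_inv_cancel₀ (hne _)]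

theorem sum_sq_norm_resolvent_apply (hH : H.IsHermitian) {z : ℂ} (hz : z.im ≠ 0) (j : n) :
    ∑ a, ‖(H - z • 1)⁻¹ j a‖ ^ 2 = ((H - z • 1)⁻¹ j j).im / z.im := by
  have hid := congrFun₂ (resolvent_sub_resolvent (hH.isUnit_sub_smul_one hz)
    (hH.isUnit_sub_smul_one (z := star z) (by simpa using hz))) j j
  rw [← hH.conjTranspose_resolvent] at hid
  set R : Matrix n n ℂ := (H - z • 1)⁻¹
  have hdiag : (R * Rᴴ) j j = ((∑ a, ‖R j a‖ ^ 2 : ℝ) : ℂ) := by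
    simp [mul_apply, mul_conj']
  rw [Matrix.smul_apply, hdiag, sub_apply, conjTranspose_apply, smul_eq_mul] at hid
  have him := congrArg Complex.im hid
  simp only [sub_im, RCLike.star_def, conj_im, im_mul_ofReal] at him
  rw [eq_div_iff hz]
  linarith

theorem sum_sq_norm_resolvent_apply' (hH : H.IsHermitian) {z : ℂ} (hz : z.im ≠ 0) (k : n) :
    ∑ a, ‖(H - z • 1)⁻¹ a k‖ ^ 2 = ((H - z • 1)⁻¹ k k).im / z.im := by
  have hz' : (star z).im ≠ 0 := by simpa using hz
  rw [← star_star z, ← hH.conjTranspose_resolvent]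
  simp only [conjTranspose_apply, norm_star]
  rw [hH.sum_sq_norm_resolvent_apply hz' k]
  simp [div_neg, neg_div]

theorem im_resolvent_apply_self_nonneg (hH : H.IsHermitian) {z : ℂ} (hz : 0 < z.im) (j : n) :
    0 ≤ ((H - z • 1)⁻¹ j j).im := by
  have hward := hH.sum_sq_norm_resolvent_apply hz.ne' j
  rw [eq_div_iff hz.ne'] at hward
  rw [← hward]
  positivity

theorem im_resolvent_apply_self (hH : H.IsHermitian) {z : ℂ} (hz : z.im ≠ 0) (j : n) :
    ((H - z • 1)⁻¹ j j).im =
      ∑ a, ‖hH.eigenvectorUnitary j a‖ ^ 2 * (z.im / normSq ((hH.eigenvalues a : ℂ) - z)) := by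
  rw [hH.resolvent_eq_conjStarAlgAut hz, Unitary.conjStarAlgAut_apply, mul_apply, Complex.im_sum]
  refine Finset.sum_congr rfl fun a _ => ?_
  simp only [mul_diagonal, star_apply, RCLike.star_def]
  rw [mul_right_comm, mul_conj', ← ofReal_pow, im_ofReal_mul, inv_im]
  simp

theorem im_resolvent_apply_self_le (hH : H.IsHermitian) (u : ℝ) {v s : ℝ} (hv : 0 < v)
    (hs : 1 ≤ s) (j : n) :
    ((H - (u + v * I) • 1)⁻¹ j j).im ≤ s * ((H - (u + s * v * I) • 1)⁻¹ j j).im := by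
  have hsv : 0 < s * v := by positivity
  have him₁ : ((u : ℂ) + v * I).im = v := by simp
  have him₂ : ((u : ℂ) + s * v * I).im = s * v := by simp
  rw [hH.im_resolvent_apply_self (by rw [him₁]; exact hv.ne'),
    hH.im_resolvent_apply_self (by rw [him₂]; exact hsv.ne'), him₁, him₂, Finset.mul_sum]
  refine Finset.sum_le_sum fun a _ => ?_
  rw [mul_left_comm]
  refine mul_le_mul_of_nonneg_left ?_ (by positivity)
  rw [← ofReal_mul, normSq_ofReal_sub_add_mul_I, normSq_ofReal_sub_add_mul_I, ← mul_div_assoc,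
    div_le_div_iff₀ (by positivity) (by positivity)]
  have hs2 : 1 ≤ s ^ 2 := one_le_pow₀ hs
  nlinarith [mul_nonneg (mul_nonneg (sub_nonneg.2 hs2) hv.le) (sq_nonneg (hH.eigenvalues a - u))]

theorem norm_resolvent_apply_le (hH : H.IsHermitian) {z w : ℂ} (hz : z.im ≠ 0)
    (hw : w.im ≠ 0) (j k : n) :
    ‖(H - z • 1)⁻¹ j k‖ ≤
      ‖(H - w • 1)⁻¹ j k‖ + ‖z - w‖ * ‖((H - z • 1)⁻¹ * (H - w • 1)⁻¹) j k‖ := by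
  have hentry := congrFun₂ (resolvent_sub_resolvent (hH.isUnit_sub_smul_one hz)
    (hH.isUnit_sub_smul_one hw)) j k
  rw [sub_eq_iff_eq_add'.1 hentry, Matrix.smul_apply, smul_eq_mul, ← norm_mul]
  exact norm_add_le _ _

theorem norm_resolvent_mul_resolvent_apply_le (hH : H.IsHermitian) {z w : ℂ} (hz : z.im ≠ 0)
    (hw : w.im ≠ 0) (j k : n) :
    ‖((H - z • 1)⁻¹ * (H - w • 1)⁻¹) j k‖ ≤
      √(((H - z • 1)⁻¹ j j).im / z.im) * √(((H - w • 1)⁻¹ k k).im / w.im) :=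
  (norm_mul_apply_le_sqrt_mul_sqrt _ _ j k).trans_eq <| by
    rw [hH.sum_sq_norm_resolvent_apply hz, hH.sum_sq_norm_resolvent_apply' hw]

theorem mul_norm_resolvent_mul_resolvent_apply_le (hH : H.IsHermitian) (u : ℝ) {v s : ℝ}
    (hv : 0 < v) (hs : 1 ≤ s) (j k : n) :
    v * ‖((H - (u + v * I) • 1)⁻¹ * (H - (u + s * v * I) • 1)⁻¹) j k‖ ≤
      √(((H - (u + s * v * I) • 1)⁻¹ j j).im * ((H - (u + s * v * I) • 1)⁻¹ k k).im) := by
  have hsv : 0 < s * v := by positivity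
  have him₁ : ((u : ℂ) + v * I).im = v := by simp
  have him₂ : ((u : ℂ) + s * v * I).im = s * v := by simp
  have hb := hH.im_resolvent_apply_self_nonneg (z := u + s * v * I) (by rw [him₂]; exact hsv) j
  have hc := hH.im_resolvent_apply_self_nonneg (z := u + s * v * I) (by rw [him₂]; exact hsv) k
  set b := ((H - (u + s * v * I) • 1)⁻¹ j j).im
  set c := ((H - (u + s * v * I) • 1)⁻¹ k k).im
  calc v * ‖((H - (u + v * I) • 1)⁻¹ * (H - (u + s * v * I) • 1)⁻¹) j k‖
      ≤ v * (√(((H - (u + v * I) • 1)⁻¹ j j).im / v) * √(c / (s * v))) := by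
        gcongr
        have := hH.norm_resolvent_mul_resolvent_apply_le (by rw [him₁]; exact hv.ne')
          (by rw [him₂]; exact hsv.ne') j k
        rwa [him₁, him₂] at this
    _ ≤ v * (√(s * b / v) * √(c / (s * v))) := by
        gcongr
        exact hH.im_resolvent_apply_self_le u hv hs j
    _ = v * √(b * c / v ^ 2) := by
        rw [← Real.sqrt_mul (by positivity)]
        congr 2
        field_simp
    _ = √(b * c) := by
        rw [Real.sqrt_div' _ (sq_nonneg v), Real.sqrt_sq hv.le]
        field_simp

end IsHermitian
end Matrix

/-- Let `H` be an `N×N` Hermitian matrix and `R(z) = (H − zI)⁻¹`.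
Then for every `u ∈ ℝ`, `v > 0`, `s ≥ 1` and all indices `j, k`:
`|R_jj(u+iv)| ≤ s |R_jj(u+isv)|`, and
`|R_jk(u+iv)| ≤ |R_jk(u+isv)| + (s−1) v |[R(u+iv) R(u+isv)]_jk|
             ≤ |R_jk(u+isv)| + (s−1) √(Im R_jj(u+isv) · Im R_kk(u+isv))`. -/
theorem stmt_11 (N : ℕ) (H : Matrix (Fin N) (Fin N) ℂ) (hH : H.IsHermitian)
    (u v s : ℝ) (hv : 0 < v) (hs : 1 ≤ s) (j k : Fin N)
    (R : ℂ → Matrix (Fin N) (Fin N) ℂ)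
    (hR : ∀ z : ℂ, R z = (H - z • (1 : Matrix (Fin N) (Fin N) ℂ))⁻¹) :
    ‖(R (u + v * I) j j)‖ ≤ s * ‖(R (u + s * v * I) j j)‖ ∧
    ‖(R (u + v * I) j k)‖ ≤
      ‖(R (u + s * v * I) j k)‖ +
        (s - 1) * v * ‖((R (u + v * I) * R (u + s * v * I)) j k)‖ ∧
    ‖(R (u + s * v * I) j k)‖ +
        (s - 1) * v * ‖((R (u + v * I) * R (u + s * v * I)) j k)‖ ≤
      ‖(R (u + s * v * I) j k)‖ +
        (s - 1) * Real.sqrt ((R (u + s * v * I) j j).im * (R (u + s * v * I) k k).im) := by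
  have hsv : 0 < s * v := by positivity
  have hz₁ : ((u : ℂ) + v * I).im ≠ 0 := by simpa using hv.ne'
  have hz₂ : ((u : ℂ) + s * v * I).im ≠ 0 := by simpa using hsv.ne'
  have hdist : ‖((u : ℂ) + v * I) - (u + s * v * I)‖ = (s - 1) * v := by
    rw [show ((u : ℂ) + v * I) - (u + s * v * I) = ((v - s * v : ℝ) : ℂ) * I by push_cast; ring,
      norm_mul, norm_I, mul_one, norm_real, Real.norm_of_nonpos (by nlinarith)]
    ring
  simp only [hR]
  set R₁ := (H - ((u : ℂ) + v * I) • 1)⁻¹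
  set R₂ := (H - ((u : ℂ) + s * v * I) • 1)⁻¹
  have hrow : ∀ k, ‖R₁ j k‖ ≤ ‖R₂ j k‖ + (s - 1) * v * ‖(R₁ * R₂) j k‖ := fun k =>
    hdist ▸ hH.norm_resolvent_apply_le hz₁ hz₂ j k
  have hcross : ∀ k, (s - 1) * v * ‖(R₁ * R₂) j k‖ ≤ (s - 1) * √((R₂ j j).im * (R₂ k k).im) :=
    fun k => by
      rw [mul_assoc]
      exact mul_le_mul_of_nonneg_left (hH.mul_norm_resolvent_mul_resolvent_apply_le u hv hs j k)
        (by linarith)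
  refine ⟨?_, hrow k, (add_le_add_iff_left _).2 (hcross k)⟩
  calc ‖R₁ j j‖ ≤ ‖R₂ j j‖ + (s - 1) * √((R₂ j j).im * (R₂ j j).im) :=
        (hrow j).trans ((add_le_add_iff_left _).2 (hcross j))
    _ = ‖R₂ j j‖ + (s - 1) * (R₂ j j).im := by
        rw [Real.sqrt_mul_self (hH.im_resolvent_apply_self_nonneg (by simpa using hsv) j)]
    _ ≤ ‖R₂ j j‖ + (s - 1) * ‖R₂ j j‖ := by
        gcongr
        exact im_le_norm _
    _ = s * ‖R₂ j j‖ := by ring
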